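/- Let C be a binary linear code with minimum distance d and let c, c' be distinct nonzero codewords of C. Then w(c ∩ c') = (w(c) + w(c') − w(c + c'))/2, and consequently, if w(c) ≤ 2i and w(c') ≤ 2i for an integer i, then w(c ∩ c') ≤ 2i − ⌈d/2⌉; hence the number of common larger halves of weight i of c and c' is at most C(2i − ⌈d/2⌉, i). -/
import Mathlib


/-- Support of a binary vector: the set of nonzero coordinates. -/
def supp {n : ℕ} (x : Fin n → ZMod 2) : Finset (Fin n) :=
  Finset.univ.filter (fun i => x i ≠ 0)

/-- Hamming weight. -/
def wt {n : ℕ} (x : Fin n → ZMod 2) : ℕ := (supp x).card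

/-- Numerical value v(x) = Σ_{i=1}^n x_i 2^(n-i) (0-based: exponent n-1-i). -/
def nval {n : ℕ} (x : Fin n → ZMod 2) : ℕ :=
  ∑ i : Fin n, (x i).val * 2 ^ (n - 1 - (i : ℕ))

/-- The total order ⪯ : first by weight, ties broken by numerical value. -/
def ple {n : ℕ} (x y : Fin n → ZMod 2) : Prop :=
  wt x < wt y ∨ (wt x = wt y ∧ nval x ≤ nval y)

/-- The strict version ≺ of ⪯. -/
def plt {n : ℕ} (x y : Fin n → ZMod 2) : Prop := ple x y ∧ x ≠ y

/-- Covering order: x ⊆ y iff S(x) ⊆ S(y). -/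
def covers {n : ℕ} (x y : Fin n → ZMod 2) : Prop := supp x ⊆ supp y

/-- v is the coset leader of its coset of C, i.e. the ⪯-minimum element
(u ranges over the coset of v: u + v ∈ C). -/
def IsCosetLeader {n : ℕ} (C : Submodule (ZMod 2) (Fin n → ZMod 2))
    (v : Fin n → ZMod 2) : Prop :=
  ∀ u, u + v ∈ C → ple v u

/-- E⁰(C): the set of correctable errors (coset leaders). -/
def E0 {n : ℕ} (C : Submodule (ZMod 2) (Fin n → ZMod 2)) : Set (Fin n → ZMod 2) :=
  {v | IsCosetLeader C v}

/-- E¹(C): the set of uncorrectable errors. -/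
def E1 {n : ℕ} (C : Submodule (ZMod 2) (Fin n → ZMod 2)) : Set (Fin n → ZMod 2) :=
  {v | ¬ IsCosetLeader C v}

/-- M¹(C): the ⊆-minimal elements of E¹(C). -/
def M1 {n : ℕ} (C : Submodule (ZMod 2) (Fin n → ZMod 2)) : Set (Fin n → ZMod 2) :=
  {v ∈ E1 C | ∀ u ∈ E1 C, covers u v → u = v}

/-- v is a larger half of c: v is ⊆-minimal among vectors u with u + c ≺ u. -/
def IsLH {n : ℕ} (c v : Fin n → ZMod 2) : Prop :=
  plt (v + c) v ∧ ∀ u, plt (u + c) u → covers u v → u = v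

/-- LH(c): the set of larger halves of c. -/
def LH {n : ℕ} (c : Fin n → ZMod 2) : Set (Fin n → ZMod 2) := {v | IsLH c v}

/-- LH(U) = ∪_{c ∈ U} LH(c). -/
def LHset {n : ℕ} (U : Set (Fin n → ZMod 2)) : Set (Fin n → ZMod 2) :=
  ⋃ c ∈ U, LH c

/-- LH⁻(c): larger halves of c of weight w(c)/2 (for even-weight c). -/
def LHm {n : ℕ} (c : Fin n → ZMod 2) : Set (Fin n → ZMod 2) :=
  {v ∈ LH c | 2 * wt v = wt c}

/-- A_i(U): elements of U of weight i. -/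
def Aw {n : ℕ} (U : Set (Fin n → ZMod 2)) (i : ℕ) : Set (Fin n → ZMod 2) :=
  {v ∈ U | wt v = i}

/-- C has minimum distance d. -/
def HasMinDist {n : ℕ} (C : Submodule (ZMod 2) (Fin n → ZMod 2)) (d : ℕ) : Prop :=
  (∃ c ∈ C, c ≠ 0 ∧ wt c = d) ∧ ∀ c ∈ C, c ≠ 0 → d ≤ wt c

/-- T is a trial set for C. -/
def IsTrialSet {n : ℕ} (C : Submodule (ZMod 2) (Fin n → ZMod 2))
    (T : Set (Fin n → ZMod 2)) : Prop :=
  T ⊆ (C : Set (Fin n → ZMod 2)) \ {0} ∧ M1 C ⊆ LHset T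

/-- l(x) = min S(x), the leftmost nonzero coordinate (⊤ if x = 0). -/
def lm {n : ℕ} (x : Fin n → ZMod 2) : WithTop (Fin n) := (supp x).min

/-- The coordinatewise "and" of two vectors: support is S(x) ∩ S(y). -/
def vand {n : ℕ} (x y : Fin n → ZMod 2) : Fin n → ZMod 2 := fun i => x i * y i

lemma zmod2_em (a : ZMod 2) : a = 0 ∨ a = 1 := by revert a; decide

lemma mem_supp {n : ℕ} {x : Fin n → ZMod 2} {i : Fin n} : i ∈ supp x ↔ x i ≠ 0 := by
  simp [supp]

lemma supp_inj {n : ℕ} {x y : Fin n → ZMod 2} (h : supp x = supp y) : x = y := by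
  funext i
  have := Finset.ext_iff.mp h i
  simp only [mem_supp] at this
  rcases zmod2_em (x i) with h1 | h1 <;> rcases zmod2_em (y i) with h2 | h2 <;> simp_all

lemma wt_add_of_disj {n : ℕ} {x y : Fin n → ZMod 2} (h : ∀ i, x i = 0 ∨ y i = 0) :
    wt (x + y) = wt x + wt y := by
  classical
  have hs : supp (x + y) = supp x ∪ supp y := by
    ext i
    simp only [mem_supp, Finset.mem_union, Pi.add_apply]
    rcases h i with h0 | h0 <;> simp [h0]
  have hdis : Disjoint (supp x) (supp y) := by
    rw [Finset.disjoint_left]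
    intro i hi hi'
    rw [mem_supp] at hi hi'
    rcases h i with h0 | h0 <;> tauto
  rw [wt, hs, Finset.card_union_of_disjoint hdis]; rfl

lemma nval_add_of_disj {n : ℕ} {x y : Fin n → ZMod 2} (h : ∀ i, x i = 0 ∨ y i = 0) :
    nval (x + y) = nval x + nval y := by
  unfold nval
  rw [← Finset.sum_add_distrib]
  apply Finset.sum_congr rfl
  intro i _
  have hv : (x i + y i).val = (x i).val + (y i).val := by
    rcases h i with h0 | h0 <;> simp [h0]
  rw [Pi.add_apply, hv, add_mul]

/-- Every larger half of a nonzero codeword c is covered by c. -/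
lemma covers_of_isLH {n : ℕ} {c v : Fin n → ZMod 2} (hv : IsLH c v) (hc : c ≠ 0) :
    supp v ⊆ supp c := by
  set a : Fin n → ZMod 2 := vand v c with ha
  set b : Fin n → ZMod 2 := v + vand v c with hb
  have hab : ∀ i, a i = 0 ∨ b i = 0 := by
    intro i
    have : ∀ p q : ZMod 2, p * q = 0 ∨ p + p * q = 0 := by decide
    exact this (v i) (c i)
  have hacb : ∀ i, (a + c) i = 0 ∨ b i = 0 := by
    intro i
    have : ∀ p q : ZMod 2, p * q + q = 0 ∨ p + p * q = 0 := by decide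
    exact this (v i) (c i)
  have hv_eq : a + b = v := by
    funext i
    have : ∀ p q : ZMod 2, p * q + (p + p * q) = p := by decide
    exact this (v i) (c i)
  have hvc_eq : (a + c) + b = v + c := by
    funext i
    have : ∀ p q : ZMod 2, (p * q + q) + (p + p * q) = p + q := by decide
    exact this (v i) (c i)
  have hwt1 : wt v = wt a + wt b := by rw [← hv_eq]; exact wt_add_of_disj hab
  have hwt2 : wt (v + c) = wt (a + c) + wt b := by rw [← hvc_eq]; exact wt_add_of_disj hacb
  have hnv1 : nval v = nval a + nval b := by rw [← hv_eq]; exact nval_add_of_disj hab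
  have hnv2 : nval (v + c) = nval (a + c) + nval b := by
    rw [← hvc_eq]; exact nval_add_of_disj hacb
  have hplt : plt (a + c) a := by
    constructor
    · rcases hv.1.1 with h | ⟨h1, h2⟩
      · left; omega
      · right
        constructor
        · omega
        · rw [hnv1, hnv2] at h2; omega
    · intro h
      apply hc
      have := add_left_cancel (a := a) (b := c) (c := 0) (by simpa using h)
      exact this
  have hcov : covers a v := by
    intro i hi
    rw [mem_supp] at hi ⊢
    intro h0
    apply hi
    simp [ha, vand, h0]
  have hav : a = v := hv.2 a hplt hcov
  intro i hi
  rw [mem_supp] at hi ⊢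
  intro h0
  apply hi
  rw [← hav]
  simp [ha, vand, h0]

lemma supp_vand {n : ℕ} (x y : Fin n → ZMod 2) : supp (vand x y) = supp x ∩ supp y := by
  ext i
  simp only [mem_supp, Finset.mem_inter, vand]
  exact mul_ne_zero_iff

lemma wt_add_vand {n : ℕ} (x y : Fin n → ZMod 2) :
    wt x + wt y = wt (x + y) + 2 * wt (vand x y) := by
  set a : Fin n → ZMod 2 := vand x y with ha
  set b : Fin n → ZMod 2 := x + vand x y with hb
  set b' : Fin n → ZMod 2 := y + vand x y with hb'
  have h1 : a + b = x := by
    funext i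
    have : ∀ p q : ZMod 2, p * q + (p + p * q) = p := by decide
    exact this (x i) (y i)
  have h2 : a + b' = y := by
    funext i
    have : ∀ p q : ZMod 2, p * q + (q + p * q) = q := by decide
    exact this (x i) (y i)
  have h3 : b + b' = x + y := by
    funext i
    have : ∀ p q : ZMod 2, (p + p * q) + (q + p * q) = p + q := by decide
    exact this (x i) (y i)
  have d1 : ∀ i, a i = 0 ∨ b i = 0 := by
    intro i
    have : ∀ p q : ZMod 2, p * q = 0 ∨ p + p * q = 0 := by decide
    exact this (x i) (y i)
  have d2 : ∀ i, a i = 0 ∨ b' i = 0 := by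
    intro i
    have : ∀ p q : ZMod 2, p * q = 0 ∨ q + p * q = 0 := by decide
    exact this (x i) (y i)
  have d3 : ∀ i, b i = 0 ∨ b' i = 0 := by
    intro i
    have : ∀ p q : ZMod 2, p + p * q = 0 ∨ q + p * q = 0 := by decide
    exact this (x i) (y i)
  have w1 : wt x = wt a + wt b := by rw [← h1]; exact wt_add_of_disj d1
  have w2 : wt y = wt a + wt b' := by rw [← h2]; exact wt_add_of_disj d2
  have w3 : wt (x + y) = wt b + wt b' := by rw [← h3]; exact wt_add_of_disj d3
  omega

/-- w(c) + w(c') = w(c + c') + 2·w(c ∩ c'); if w(c), w(c') ≤ 2i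
then w(c ∩ c') ≤ 2i − ⌈d/2⌉, and the number of common larger halves of weight i
is at most C(2i − ⌈d/2⌉, i). -/
theorem stmt16 {n : ℕ} (C : Submodule (ZMod 2) (Fin n → ZMod 2)) (d : ℕ)
    (hd : HasMinDist C d)
    (c c' : Fin n → ZMod 2) (hc : c ∈ C) (hc' : c' ∈ C)
    (hc0 : c ≠ 0) (hc0' : c' ≠ 0) (hne : c ≠ c') :
    wt c + wt c' = wt (c + c') + 2 * wt (vand c c') ∧
    ∀ i : ℕ, wt c ≤ 2 * i → wt c' ≤ 2 * i →
      wt (vand c c') ≤ 2 * i - (d + 1) / 2 ∧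
      (Aw (LH c ∩ LH c') i).ncard ≤ Nat.choose (2 * i - (d + 1) / 2) i := by
  have hmain := wt_add_vand c c'
  refine ⟨hmain, fun i hi hi' => ?_⟩
  have hcc'0 : c + c' ≠ 0 := by
    intro h
    apply hne
    have : ∀ j, c j + c' j = 0 → c j = c' j := by
      intro j
      have : ∀ p q : ZMod 2, p + q = 0 → p = q := by decide
      exact this _ _
    funext j
    exact this j (congrFun h j)
  have hdcc' : d ≤ wt (c + c') := hd.2 _ (C.add_mem hc hc') hcc'0
  have hdc : d ≤ wt c := hd.2 _ hc hc0
  have hbound : wt (vand c c') ≤ 2 * i - (d + 1) / 2 := by omega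
  refine ⟨hbound, ?_⟩
  classical
  set m : Finset (Fin n) := supp (vand c c') with hm
  have hmapsto : ∀ v ∈ Aw (LH c ∩ LH c') i, supp v ∈ m.powersetCard i := by
    intro v hv
    obtain ⟨⟨h1, h2⟩, h3⟩ := hv
    rw [Finset.mem_powersetCard]
    refine ⟨?_, h3⟩
    rw [hm, supp_vand]
    intro j hj
    rw [Finset.mem_inter]
    exact ⟨covers_of_isLH h1 hc0 hj, covers_of_isLH h2 hc0' hj⟩
  have hinj : Set.InjOn supp (Aw (LH c ∩ LH c') i) := fun x _ y _ h => supp_inj h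
  have hcard : (Aw (LH c ∩ LH c') i).ncard ≤ (m.powersetCard i).card := by
    have hmapsto' : ∀ v ∈ Aw (LH c ∩ LH c') i,
        supp v ∈ (↑(m.powersetCard i) : Set (Finset (Fin n))) := by
      intro v hv; exact_mod_cast hmapsto v hv
    have := Set.ncard_le_ncard_of_injOn supp hmapsto' hinj (m.powersetCard i).finite_toSet
    rwa [Set.ncard_coe_finset] at this
  calc (Aw (LH c ∩ LH c') i).ncard ≤ (m.powersetCard i).card := hcard
    _ = m.card.choose i := Finset.card_powersetCard i m
    _ ≤ Nat.choose (2 * i - (d + 1) / 2) i := Nat.choose_le_choose i hbound
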